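/- Let (u_k) be a sequence of measurable functions on ℝⁿ converging locally uniformly to u, let φ be continuous, and suppose there is M > 0 and a sequence κ_k → 0⁺ with ∫ A_{κ_k}(u_k − φ) dx ≤ M for all k, where A_κ(t) ≥ (δ/2)·(1/κ) whenever t ≤ −δ/2 and δ ≥ κ. Then u ≥ φ almost everywhere. -/

import Mathlib

open MeasureTheory Filter Topology

/-- If measurable `u_k → u` locally uniformly, `φ` is continuous, and the
penalization energies `∫ A_{κ_k}(u_k − φ)` are uniformly bounded by `M` along a sequence
`κ_k → 0⁺`, where `A_κ ≥ 0` and `A_κ(t) ≥ (δ/2)(1/κ)` whenever `t ≤ −δ/2` and `δ ≥ κ`,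
then `u ≥ φ` almost everywhere. -/
theorem stmt5 {n : ℕ} (u : ℕ → EuclideanSpace ℝ (Fin n) → ℝ)
    (uLim φ : EuclideanSpace ℝ (Fin n) → ℝ)
    (humeas : ∀ k, Measurable (u k))
    (hconv : TendstoLocallyUniformly u uLim atTop)
    (hφ : Continuous φ)
    (A : ℝ → ℝ → ℝ) (hA0 : ∀ κ t, 0 ≤ A κ t)
    (hAblow : ∀ κ δ t : ℝ, 0 < κ → κ ≤ δ → t ≤ -(δ / 2) → (δ / 2) * (1 / κ) ≤ A κ t)
    (κ : ℕ → ℝ) (hκpos : ∀ k, 0 < κ k) (hκ : Tendsto κ atTop (𝓝[>] 0))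
    (M : ℝ) (hM : 0 < M)
    (hbound : ∀ k, ∫⁻ x, ENNReal.ofReal (A (κ k) (u k x - φ x)) ≤ ENNReal.ofReal M) :
    ∀ᵐ x, φ x ≤ uLim x := by
  have huLim : Measurable uLim :=
    measurable_of_tendsto_metrizable' atTop humeas
      (tendsto_pi_nhds.2 fun x =>
        (tendstoLocallyUniformlyOn_univ.2 hconv).tendsto_at (Set.mem_univ x))
  -- key: for each δ > 0 and radius R, the bad set has measure zero
  have key : ∀ δ : ℝ, 0 < δ → ∀ R : ℝ,
      volume ({x | uLim x - φ x ≤ -δ} ∩ Metric.closedBall 0 R) = 0 := by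
    intro δ hδ R
    set S := {x | uLim x - φ x ≤ -δ} ∩ Metric.closedBall 0 R with hS
    have hSm : MeasurableSet S := by
      exact (measurableSet_le (huLim.sub hφ.measurable) measurable_const).inter
        measurableSet_closedBall
    have hunif : TendstoUniformlyOn u uLim atTop (Metric.closedBall 0 R) :=
      (tendstoLocallyUniformly_iff_forall_isCompact.1 hconv) _ (isCompact_closedBall 0 R)
    -- eventually, sup over ball is < δ/2 and κ k ≤ δ
    have h1 : ∀ᶠ k in atTop, ∀ x ∈ Metric.closedBall (0 : EuclideanSpace ℝ (Fin n)) R,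
        dist (uLim x) (u k x) < δ / 2 :=
      (Metric.tendstoUniformlyOn_iff.1 hunif) (δ / 2) (by linarith)
    have h2 : ∀ᶠ k in atTop, κ k ≤ δ := by
      have := hκ.mono_right nhdsWithin_le_nhds
      filter_upwards [this.eventually (eventually_le_nhds hδ)] with k hk using hk
    -- Markov bound for such k
    have hbd : ∀ᶠ k in atTop, volume S ≤ ENNReal.ofReal (2 * M / δ * κ k) := by
      filter_upwards [h1, h2] with k hk1 hk2
      have hκk := hκpos k
      have hAS : ∀ x ∈ S, (δ / 2) * (1 / κ k) ≤ A (κ k) (u k x - φ x) := by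
        intro x hx
        refine hAblow _ δ _ hκk hk2 ?_
        have hd := hk1 x hx.2
        rw [Real.dist_eq] at hd
        have h3 : uLim x - φ x ≤ -δ := hx.1
        have := abs_lt.1 hd
        linarith [this.1, this.2]
      have hmono : ∀ x, S.indicator (fun _ => ENNReal.ofReal ((δ / 2) * (1 / κ k))) x
          ≤ ENNReal.ofReal (A (κ k) (u k x - φ x)) := by
        intro x
        by_cases hx : x ∈ S
        · simpa [Set.indicator_of_mem hx] using ENNReal.ofReal_le_ofReal (hAS x hx)
        · simp [Set.indicator_of_notMem hx]
      have hcalc : ENNReal.ofReal ((δ / 2) * (1 / κ k)) * volume S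
          ≤ ENNReal.ofReal M := by
        calc ENNReal.ofReal ((δ / 2) * (1 / κ k)) * volume S
            = ∫⁻ x, S.indicator (fun _ => ENNReal.ofReal ((δ / 2) * (1 / κ k))) x := by
              rw [lintegral_indicator hSm, setLIntegral_const]
          _ ≤ ∫⁻ x, ENNReal.ofReal (A (κ k) (u k x - φ x)) := lintegral_mono hmono
          _ ≤ ENNReal.ofReal M := hbound k
      have hcpos : 0 < (δ / 2) * (1 / κ k) := by positivity
      calc volume S
          ≤ ENNReal.ofReal M / ENNReal.ofReal ((δ / 2) * (1 / κ k)) :=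
            (ENNReal.le_div_iff_mul_le (Or.inl (ENNReal.ofReal_pos.2 hcpos).ne')
              (Or.inl ENNReal.ofReal_ne_top)).2 (by rwa [mul_comm] at hcalc)
        _ = ENNReal.ofReal (M / ((δ / 2) * (1 / κ k))) :=
            (ENNReal.ofReal_div_of_pos hcpos).symm
        _ ≤ ENNReal.ofReal (2 * M / δ * κ k) := by
            apply ENNReal.ofReal_le_ofReal
            apply le_of_eq
            have h1 : δ ≠ 0 := hδ.ne'
            have h2 : κ k ≠ 0 := hκk.ne'
            field_simp
    -- κ k → 0, so the bound tends to 0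
    have hκ0 : Tendsto (fun k => ENNReal.ofReal (2 * M / δ * κ k)) atTop (𝓝 0) := by
      have : Tendsto (fun k => 2 * M / δ * κ k) atTop (𝓝 (2 * M / δ * 0)) :=
        (tendsto_const_nhds.mul (hκ.mono_right nhdsWithin_le_nhds))
      rw [mul_zero] at this
      simpa [Function.comp_def] using (ENNReal.continuous_ofReal.tendsto 0).comp this
    have hle : volume S ≤ 0 :=
      le_of_tendsto_of_tendsto tendsto_const_nhds hκ0 hbd
    exact le_antisymm hle zero_le
  -- conclude
  rw [ae_iff]
  have hsub : {x : EuclideanSpace ℝ (Fin n) | ¬ φ x ≤ uLim x} ⊆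
      ⋃ (m : ℕ) (R : ℕ), ({x | uLim x - φ x ≤ -(1 / (m + 1 : ℝ))} ∩ Metric.closedBall 0 R) := by
    intro x hx
    simp only [Set.mem_setOf_eq, not_le] at hx
    obtain ⟨m, hm⟩ := exists_nat_one_div_lt (show (0:ℝ) < φ x - uLim x by linarith)
    refine Set.mem_iUnion.2 ⟨m, Set.mem_iUnion.2 ⟨⌈‖x‖⌉₊, ?_, ?_⟩⟩
    · simp only [Set.mem_setOf_eq]; linarith
    · simpa [Metric.mem_closedBall, dist_zero_right] using Nat.le_ceil ‖x‖
  refine measure_mono_null hsub ?_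
  refine measure_iUnion_null fun m => measure_iUnion_null fun R => ?_
  exact key (1 / (m + 1 : ℝ)) (by positivity) R
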